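/- Full-sum variant of the hook summation formula: with notation as in the hook summation formula, for n ≥ 1, Θ_n := ∑ over increasing trees T on {1,…,n} of (∏_{i=2}^{n} x_{f_T(i)})·(∏_{i=1}^{n} ∑_{j ∈ h_T(i)} y_{i,j}) equals y_{n,n} · ∏_{i=1}^{n-1} ( y_{i,i}·∑_{j=1}^{i} x_j + x_i·∑_{j=i+1}^{n} y_{i,j} ). -/

import Mathlib

/-!
Induction on `n`, deleting the largest vertex, which is always a leaf. If its parent is `a`,
the leaf lies in the hook of exactly the ancestors of `a`, so the hook sums of the remaining
tree are those for the matrix `y` with its last column added to column `a`, while the leaf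
itself contributes `x a` and its own hook sum `y_{n+1,n+1}`. By induction the sum becomes
`∑ a, x a * y_{n+1,n+1}` times the closed form for the folded matrix, whose `i`-th factor depends
on `a` only through whether `i = a` or `i < a`; this sum over `a` telescopes.
-/

open scoped Classical in
/-- The hook of vertex `i` in the tree with parent function `p`. -/
noncomputable def hook {N : ℕ} (p : Fin N → Fin N) (i : Fin N) : Finset (Fin N) :=
  Finset.univ.filter fun j => ∃ k : ℕ, p^[k] j = i

open Finset

namespace Fin

variable {n : ℕ}

theorem prod_univ_erase_zero {M : Type*} [CommMonoid M] (f : Fin (n + 2) → M) :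
    ∏ i ∈ univ.erase 0, f i
      = (∏ i ∈ (univ : Finset (Fin (n + 1))).erase 0, f i.castSucc) * f (last (n + 1)) := by
  simp [← filter_ne', prod_filter, prod_univ_castSucc]

theorem univ_erase_last : univ.erase (last n) = Iio (last n) := by
  ext i
  simp only [mem_erase, mem_Iio, mem_univ, and_true, lt_last_iff_ne_last]

theorem Iic_last : Iic (last n) = univ := by
  ext i
  simp [le_last]

theorem sum_Ioi_castSucc {M : Type*} [AddCommMonoid M] (f : Fin (n + 2) → M) (i : Fin (n + 1)) :
    ∑ j ∈ Ioi i.castSucc, f j = ∑ j ∈ Ioi i, f j.castSucc + f (last (n + 1)) := by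
  rw [← Ioc_top, top_eq_last, ← Ioo_insert_right (castSucc_lt_last i), sum_insert (by simp),
    ← map_castSuccEmb_Ioi, sum_map, add_comm, coe_castSuccEmb]

end Fin

theorem Finset.sum_mul_add_ite_mul {α R : Type*} [DecidableEq α] [CommSemiring R] (s : Finset α)
    {m : α} (hm : m ∈ s) (x P : α → R) (A B : R) :
    ∑ a ∈ s, x a * ((A + if a = m then B else 0) * P a)
      = A * ∑ a ∈ s, x a * P a + x m * B * P m := by
  have split_term : ∀ a, x a * ((A + if a = m then B else 0) * P a)
      = A * (x a * P a) + if a = m then x m * B * P m else 0 := fun a => by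
    split_ifs with h
    · subst h; ring
    · ring
  rw [sum_congr rfl fun a _ => split_term a, sum_add_distrib, ← mul_sum, sum_ite_eq', if_pos hm]

section Telescoping

variable {α R : Type*} [LinearOrder α] [LocallyFiniteOrderBot α] [CommSemiring R]

/-- The `i`-th factor of the closed form after the column `z` has been folded into column `a`,
when `c i`, `d i`, `z i` stand for `y i i`, `∑ j > i, y i j` and `y i last`. -/
def leafFactor (x c d z : α → R) (a i : α) : R :=
  (c i + if i = a then z i else 0) * ∑ j ∈ Iic i, x j + x i * (d i + if i < a then z i else 0)

variable (x c d z : α → R)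

theorem leafFactor_of_lt {a i : α} (h : i < a) :
    leafFactor x c d z a i = c i * ∑ j ∈ Iic i, x j + x i * (d i + z i) := by
  simp [leafFactor, h.ne, h]

theorem leafFactor_of_le {a i : α} (h : a ≤ i) :
    leafFactor x c d z a i
      = c i * ∑ j ∈ Iic i, x j + x i * d i
        + if a = i then z i * ∑ j ∈ Iic i, x j else 0 := by
  simp only [leafFactor, not_lt.2 h, if_false, add_zero, eq_comm (a := i)]
  split_ifs <;> ring

theorem sum_mul_prod_leafFactor [WellFoundedLT α] (m : α) :
    ∑ a ∈ Iic m, x a * ∏ i ∈ Iio m, leafFactor x c d z a i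
      = (∑ j ∈ Iic m, x j) * ∏ i ∈ Iio m, leafFactor x c d z m i := by
  induction m using WellFoundedLT.induction with
  | _ m ih =>
  rcases (Iio m).eq_empty_or_nonempty with hm | hm
  · simp [← Iio_insert, hm]
  set k := (Iio m).max' hm
  have hkm : k < m := mem_Iio.1 ((Iio m).max'_mem hm)
  have hIio : Iio m = Iic k := by
    ext i
    exact ⟨fun hi => mem_Iic.2 ((Iio m).le_max' i hi),
      fun hi => mem_Iio.2 ((mem_Iic.1 hi).trans_lt hkm)⟩
  have prod_Iic_k (f : α → R) : ∏ i ∈ Iic k, f i = f k * ∏ i ∈ Iio k, f i := by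
    rw [Iic_eq_cons_Iio, prod_cons]
  have hk : ∑ a ∈ Iic k, x a * ∏ i ∈ Iic k, leafFactor x c d z a i
      = (∑ j ∈ Iic k, x j) * ∏ i ∈ Iic k, leafFactor x c d z m i := by
    have h_Iio_k :
        ∏ i ∈ Iio k, leafFactor x c d z k i = ∏ i ∈ Iio k, leafFactor x c d z m i :=
      prod_congr rfl fun i hi => by
        rw [leafFactor_of_lt x c d z (mem_Iio.1 hi),
          leafFactor_of_lt x c d z ((mem_Iio.1 hi).trans hkm)]
    calc ∑ a ∈ Iic k, x a * ∏ i ∈ Iic k, leafFactor x c d z a i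
        = ∑ a ∈ Iic k, x a * ((c k * ∑ j ∈ Iic k, x j + x k * d k
            + if a = k then z k * ∑ j ∈ Iic k, x j else 0)
              * ∏ i ∈ Iio k, leafFactor x c d z a i) :=
          sum_congr rfl fun a ha => by rw [prod_Iic_k, leafFactor_of_le x c d z (mem_Iic.1 ha)]
      _ = (c k * ∑ j ∈ Iic k, x j + x k * d k)
            * ∑ a ∈ Iic k, x a * ∏ i ∈ Iio k, leafFactor x c d z a i
          + x k * (z k * ∑ j ∈ Iic k, x j) * ∏ i ∈ Iio k, leafFactor x c d z k i :=
          sum_mul_add_ite_mul _ (mem_Iic.2 le_rfl) _ _ _ _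
      _ = (∑ j ∈ Iic k, x j) * ∏ i ∈ Iic k, leafFactor x c d z m i := by
          rw [ih k hkm, h_Iio_k, prod_Iic_k, leafFactor_of_lt x c d z hkm]
          ring
  rw [Iic_eq_cons_Iio m, sum_cons, sum_cons, hIio, hk]
  ring

theorem sum_mul_mul_prod_leafFactor [WellFoundedLT α] (m : α) :
    ∑ a ∈ Iic m,
        x a * ((c m + if a = m then z m else 0) * ∏ i ∈ Iio m, leafFactor x c d z a i)
      = (c m * ∑ j ∈ Iic m, x j + x m * z m) * ∏ i ∈ Iio m, leafFactor x c d z m i := by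
  rw [sum_mul_add_ite_mul _ (mem_Iic.2 le_rfl), sum_mul_prod_leafFactor]
  ring

end Telescoping

theorem mem_hook {N : ℕ} {p : Fin N → Fin N} {i j : Fin N} :
    j ∈ hook p i ↔ ∃ k : ℕ, p^[k] j = i := by
  simp [hook]

section Trees

variable {n : ℕ}

open scoped Classical in
noncomputable def increasingTrees (n : ℕ) : Finset (Fin (n + 1) → Fin (n + 1)) :=
  Finset.univ.filter fun p : Fin (n + 1) → Fin (n + 1) => p 0 = 0 ∧ ∀ i, i ≠ 0 → p i < i

theorem mem_increasingTrees {p : Fin (n + 1) → Fin (n + 1)} :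
    p ∈ increasingTrees n ↔ p 0 = 0 ∧ ∀ i, i ≠ 0 → p i < i := by
  simp [increasingTrees]

theorem le_of_mem_increasingTrees {p : Fin (n + 1) → Fin (n + 1)} (hp : p ∈ increasingTrees n)
    (i : Fin (n + 1)) : p i ≤ i := by
  obtain ⟨h0, hlt⟩ := mem_increasingTrees.1 hp
  rcases eq_or_ne i 0 with rfl | hi
  · exact h0.le
  · exact (hlt i hi).le

def extendLeaf (q : Fin (n + 1) → Fin (n + 1)) (a : Fin (n + 1)) : Fin (n + 2) → Fin (n + 2) :=
  Fin.lastCases a.castSucc fun i => (q i).castSucc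

@[simp]
theorem extendLeaf_last (q : Fin (n + 1) → Fin (n + 1)) (a : Fin (n + 1)) :
    extendLeaf q a (Fin.last (n + 1)) = a.castSucc := by
  simp [extendLeaf]

@[simp]
theorem extendLeaf_castSucc (q : Fin (n + 1) → Fin (n + 1)) (a i : Fin (n + 1)) :
    extendLeaf q a i.castSucc = (q i).castSucc := by
  simp [extendLeaf]

theorem extendLeaf_mem_increasingTrees {q : Fin (n + 1) → Fin (n + 1)}
    (hq : q ∈ increasingTrees n) (a : Fin (n + 1)) :
    extendLeaf q a ∈ increasingTrees (n + 1) := by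
  obtain ⟨h0, hlt⟩ := mem_increasingTrees.1 hq
  refine mem_increasingTrees.2 ⟨?_, fun i hi => ?_⟩
  · rw [← Fin.castSucc_zero, extendLeaf_castSucc, h0, Fin.castSucc_zero]
  induction i using Fin.lastCases with
  | last => simp [Fin.castSucc_lt_last]
  | cast i => simpa using hlt i (by simpa using hi)

theorem sum_increasingTrees_succ {M : Type*} [AddCommMonoid M]
    (F : (Fin (n + 2) → Fin (n + 2)) → M) :
    ∑ p ∈ increasingTrees (n + 1), F p
      = ∑ a, ∑ q ∈ increasingTrees n, F (extendLeaf q a) := by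
  rw [← sum_product']
  symm
  refine sum_bij' (fun aq _ => extendLeaf aq.2 aq.1)
    (fun p hp => ((p (Fin.last _)).castPred ?_, fun i => (p i.castSucc).castPred ?_))
    (fun aq haq => extendLeaf_mem_increasingTrees (mem_product.1 haq).2 aq.1) ?_ ?_ ?_
    fun _ _ => rfl
  · exact ((mem_increasingTrees.1 hp).2 _ Fin.last_pos.ne').ne
  · exact ((le_of_mem_increasingTrees hp _).trans_lt (Fin.castSucc_lt_last i)).ne
  · intro p hp
    obtain ⟨h0, hlt⟩ := mem_increasingTrees.1 hp
    refine mem_product.2 ⟨mem_univ _, mem_increasingTrees.2 ⟨?_, fun i hi => ?_⟩⟩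
    · exact Fin.castSucc_injective _ (by simp [h0])
    · simpa only [Fin.castPred_lt_iff] using hlt _ (by simpa using hi)
  · intro aq _
    ext : 1 <;> simp
  · intro p _
    funext i
    induction i using Fin.lastCases <;> simp

theorem iterate_extendLeaf_castSucc (q : Fin (n + 1) → Fin (n + 1)) (a : Fin (n + 1)) (k : ℕ)
    (i : Fin (n + 1)) : (extendLeaf q a)^[k] i.castSucc = (q^[k] i).castSucc := by
  induction k generalizing i with
  | zero => rfl
  | succ k ih => simp [Function.iterate_succ_apply, ih]

theorem castSucc_mem_hook_extendLeaf {q : Fin (n + 1) → Fin (n + 1)} {a i j : Fin (n + 1)} :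
    j.castSucc ∈ hook (extendLeaf q a) i.castSucc ↔ j ∈ hook q i := by
  simp [mem_hook, iterate_extendLeaf_castSucc]

theorem last_mem_hook_extendLeaf {q : Fin (n + 1) → Fin (n + 1)} {a i : Fin (n + 1)} :
    Fin.last (n + 1) ∈ hook (extendLeaf q a) i.castSucc ↔ a ∈ hook q i := by
  simp only [mem_hook]
  constructor
  · rintro ⟨_ | k, hk⟩
    · exact absurd hk (Fin.castSucc_lt_last i).ne'
    · rw [Function.iterate_succ_apply, extendLeaf_last, iterate_extendLeaf_castSucc] at hk
      exact ⟨k, Fin.castSucc_injective _ hk⟩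
  · rintro ⟨k, hk⟩
    refine ⟨k + 1, ?_⟩
    rw [Function.iterate_succ_apply, extendLeaf_last, iterate_extendLeaf_castSucc, hk]

theorem hook_extendLeaf_last (q : Fin (n + 1) → Fin (n + 1)) (a : Fin (n + 1)) :
    hook (extendLeaf q a) (Fin.last (n + 1)) = {Fin.last (n + 1)} := by
  ext j
  induction j using Fin.lastCases with
  | last => simpa [mem_hook] using ⟨0, rfl⟩
  | cast j => simp [mem_hook, iterate_extendLeaf_castSucc, (Fin.castSucc_lt_last _).ne]

theorem sum_hook_extendLeaf_castSucc {M : Type*} [AddCommMonoid M]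
    (q : Fin (n + 1) → Fin (n + 1)) (a i : Fin (n + 1)) (f : Fin (n + 2) → M) :
    ∑ j ∈ hook (extendLeaf q a) i.castSucc, f j
      = ∑ j ∈ hook q i, (f j.castSucc + if j = a then f (Fin.last (n + 1)) else 0) := by
  rw [← univ_inter (hook _ _), ← sum_ite_mem, Fin.sum_univ_castSucc]
  simp only [castSucc_mem_hook_extendLeaf, last_mem_hook_extendLeaf]
  rw [sum_ite_mem, univ_inter, sum_add_distrib, sum_ite_eq']

end Trees

section Formula

variable {n : ℕ} {R : Type*} [CommSemiring R]

noncomputable def treeWeight (x : Fin (n + 1) → R) (y : Fin (n + 1) → Fin (n + 1) → R)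
    (p : Fin (n + 1) → Fin (n + 1)) : R :=
  (∏ i ∈ univ.erase 0, x (p i)) * ∏ i, ∑ j ∈ hook p i, y i j

def hookFormula (x : Fin (n + 1) → R) (y : Fin (n + 1) → Fin (n + 1) → R) : R :=
  y (Fin.last n) (Fin.last n) *
    ∏ i ∈ univ.erase (Fin.last n), (y i i * ∑ j ∈ Iic i, x j + x i * ∑ j ∈ Ioi i, y i j)

def foldLastColumn (y : Fin (n + 2) → Fin (n + 2) → R) (a i j : Fin (n + 1)) : R :=
  y i.castSucc j.castSucc + if j = a then y i.castSucc (Fin.last (n + 1)) else 0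

theorem treeWeight_extendLeaf (x : Fin (n + 2) → R) (y : Fin (n + 2) → Fin (n + 2) → R)
    (q : Fin (n + 1) → Fin (n + 1)) (a : Fin (n + 1)) :
    treeWeight x y (extendLeaf q a)
      = x a.castSucc * y (Fin.last (n + 1)) (Fin.last (n + 1))
        * treeWeight (fun i => x i.castSucc) (foldLastColumn y a) q := by
  simp only [treeWeight, Fin.prod_univ_erase_zero, Fin.prod_univ_castSucc, extendLeaf_castSucc,
    extendLeaf_last, hook_extendLeaf_last, sum_singleton, sum_hook_extendLeaf_castSucc,
    foldLastColumn]
  ring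

theorem hookFormula_succ (x : Fin (n + 2) → R) (y : Fin (n + 2) → Fin (n + 2) → R) :
    hookFormula x y = ∑ a, x a.castSucc * y (Fin.last (n + 1)) (Fin.last (n + 1))
      * hookFormula (fun i => x i.castSucc) (foldLastColumn y a) := by
  set x' : Fin (n + 1) → R := fun i => x i.castSucc
  set c : Fin (n + 1) → R := fun i => y i.castSucc i.castSucc
  set d : Fin (n + 1) → R := fun i => ∑ j ∈ Ioi i, y i.castSucc j.castSucc
  set z : Fin (n + 1) → R := fun i => y i.castSucc (Fin.last (n + 1))
  have h_fold : ∀ a, hookFormula x' (foldLastColumn y a)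
      = (c (Fin.last n) + if a = Fin.last n then z (Fin.last n) else 0)
        * ∏ i ∈ Iio (Fin.last n), leafFactor x' c d z a i := by
    intro a
    simp only [hookFormula, Fin.univ_erase_last, foldLastColumn, leafFactor, sum_add_distrib,
      sum_ite_eq', mem_Ioi, eq_comm (a := a), x', c, d, z]
  have h_unfold : hookFormula x y = y (Fin.last (n + 1)) (Fin.last (n + 1))
      * ((c (Fin.last n) * ∑ j ∈ Iic (Fin.last n), x' j + x' (Fin.last n) * z (Fin.last n))
        * ∏ i ∈ Iio (Fin.last n), leafFactor x' c d z (Fin.last n) i) := by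
    rw [hookFormula, Fin.univ_erase_last, Fin.Iio_last_eq_map, prod_map,
      ← mul_prod_erase univ _ (mem_univ (Fin.last n)), Fin.univ_erase_last]
    congr 2
    · simp [Fin.sum_Iic_castSucc, Fin.sum_Ioi_castSucc, ← Fin.top_eq_last, x', c, z]
    · refine prod_congr rfl fun i hi => ?_
      rw [leafFactor_of_lt x' c d z (mem_Iio.1 hi)]
      simp [Fin.sum_Iic_castSucc, Fin.sum_Ioi_castSucc, x', c, d, z]
  rw [h_unfold, ← sum_mul_mul_prod_leafFactor, Fin.Iic_last, mul_sum]
  refine sum_congr rfl fun a _ => ?_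
  rw [h_fold]
  ring

theorem sum_treeWeight_increasingTrees (n : ℕ) (x : Fin (n + 1) → R)
    (y : Fin (n + 1) → Fin (n + 1) → R) :
    ∑ p ∈ increasingTrees n, treeWeight x y p = hookFormula x y := by
  induction n with
  | zero => simp [increasingTrees, treeWeight, hookFormula, hook, Fin.fin_one_eq_zero]
  | succ n ih =>
    simp_rw [sum_increasingTrees_succ, treeWeight_extendLeaf, ← mul_sum, ih, hookFormula_succ]

end Formula

open scoped Classical in
/-- Vertices `1, …, n + 1` are encoded as `Fin (n + 1)`, the root being `0`. -/
theorem hook_summation_full {R : Type*} [CommRing R] (n : ℕ)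
    (x : Fin (n + 1) → R) (y : Fin (n + 1) → Fin (n + 1) → R) :
    ∑ p ∈ (Finset.univ.filter fun p : Fin (n + 1) → Fin (n + 1) =>
        p 0 = 0 ∧ ∀ i, i ≠ 0 → p i < i),
      (∏ i ∈ Finset.univ.erase (0 : Fin (n + 1)), x (p i)) *
        ∏ i : Fin (n + 1), ∑ j ∈ hook p i, y i j
    = y (Fin.last n) (Fin.last n) *
        ∏ i ∈ Finset.univ.erase (Fin.last n),
          (y i i * ∑ j ∈ Finset.Iic i, x j + x i * ∑ j ∈ Finset.Ioi i, y i j) :=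
  sum_treeWeight_increasingTrees n x y
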